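/- arXiv:2512.15509 — 2 statements merged into one kernel-verified Lean document; each statement's English description precedes it below -/
import Mathlib

section
/- Define a chain complex C of abelian groups indexed by ℕ with C_n = ℤ for all n, where the differential C_{2n} → C_{2n-1} is multiplication by n (for n ≥ 1) and the differential C_{2n+1} → C_{2n} is zero. Then this is a chain complex (d² = 0), and its homology satisfies: H_0(C) ≅ ℤ, H_{2n-1}(C) ≅ ℤ/n for all n ≥ 1, and H_{2n}(C) = 0 for all n ≥ 1. -/
open CategoryTheory CategoryTheory.Limits

/-- The chain complex `C` with `C_n = ℤ` for all `n`, where the differential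
`C_{2n} → C_{2n-1}` is multiplication by `n` and `C_{2n+1} → C_{2n}` is zero.
(The differential out of degree `j+1` is nonzero exactly when `j` is odd,
in which case `j+1 = 2m` with `m = (j+1)/2`.) -/
noncomputable def stmt7Complex : ChainComplex (ModuleCat ℤ) ℕ :=
  ChainComplex.of (fun _ => ModuleCat.of ℤ ℤ)
    (fun j => if j % 2 = 1 then
        ModuleCat.ofHom ((((j + 1) / 2 : ℕ) : ℤ) • (LinearMap.id : ℤ →ₗ[ℤ] ℤ)) else 0)
    (by
      intro j
      try dsimp only
      rcases Nat.even_or_odd j with h | h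
      · have h0 := Nat.even_iff.mp h
        rw [if_neg (show ¬ j % 2 = 1 by omega)]
        simp
      · have h1 := Nat.odd_iff.mp h
        rw [if_neg (show ¬ (j + 1) % 2 = 1 by omega)]
        simp)

/-! Each homology group is read off a three-term piece `ℤ → ℤ → ℤ` of the complex. In degree
`2m + 1` the incoming differential is multiplication by `m + 1` and the outgoing one is zero, so
the homology is `ℤ ⧸ (m + 1) = ZMod (m + 1)`; in degree `2m + 2` the incoming differential is zero
and the outgoing one is the injective multiplication by `m + 1`, so the homology vanishes; in
degree `0` both differentials vanish. -/

universe u v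

noncomputable def CategoryTheory.ShortComplex.moduleCatHomologyIsoQuotientOfGEqZero
    {R : Type u} [Ring R] (S : ShortComplex (ModuleCat.{v} R)) (hg : S.g = 0) :
    S.homology ≅ ModuleCat.of R (S.X₂ ⧸ LinearMap.range S.f.hom) :=
  S.asIsoHomologyι hg ≪≫ S.moduleCatOpcyclesIso

lemma Int.range_natCast_smul_id (n : ℕ) :
    LinearMap.range ((n : ℤ) • LinearMap.id : ℤ →ₗ[ℤ] ℤ) = Ideal.span {(n : ℤ)} := by
  ext x
  simp [Ideal.mem_span_singleton', mul_comm]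

noncomputable def Int.natMulShortComplex (n : ℕ) : ShortComplex (ModuleCat ℤ) :=
  ShortComplex.mk (ModuleCat.ofHom ((n : ℤ) • LinearMap.id))
    (0 : ModuleCat.of ℤ ℤ ⟶ ModuleCat.of ℤ ℤ) (by simp)

noncomputable def Int.natMulShortComplexHomologyIso (n : ℕ) :
    (Int.natMulShortComplex n).homology ≅ ModuleCat.of ℤ (ZMod n) :=
  ShortComplex.moduleCatHomologyIsoQuotientOfGEqZero _ rfl ≪≫
    (Submodule.quotEquivOfEq _ _ (Int.range_natCast_smul_id n) ≪≫ₗ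
      (Int.quotientSpanNatEquivZMod n).toAddEquiv.toIntLinearEquiv).toModuleIso

namespace stmt7Complex

lemma d_succ (j : ℕ) : stmt7Complex.d (j + 1) j =
    if j % 2 = 1 then
      ModuleCat.ofHom ((((j + 1) / 2 : ℕ) : ℤ) • (LinearMap.id : ℤ →ₗ[ℤ] ℤ)) else 0 := by
  unfold stmt7Complex
  exact ChainComplex.of_d (fun _ => ModuleCat.of ℤ ℤ) (fun j => if j % 2 = 1 then
    ModuleCat.ofHom ((((j + 1) / 2 : ℕ) : ℤ) • (LinearMap.id : ℤ →ₗ[ℤ] ℤ)) else 0) j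

lemma d_from_odd (m : ℕ) : stmt7Complex.d (2 * m + 1) (2 * m) = 0 := by
  rw [d_succ, if_neg (by omega)]
  rfl

lemma d_from_even (m : ℕ) : stmt7Complex.d (2 * m + 2) (2 * m + 1) =
    ModuleCat.ofHom (((m + 1 : ℕ) : ℤ) • (LinearMap.id : ℤ →ₗ[ℤ] ℤ)) := by
  rw [d_succ, if_pos (by omega), show (2 * m + 1 + 1) / 2 = m + 1 by omega]

noncomputable def homologyZeroIso : stmt7Complex.homology 0 ≅ ModuleCat.of ℤ ℤ :=
  (stmt7Complex.isoHomologyπ 1 0 (ChainComplex.prev ℕ 0) (d_from_odd 0)).symm ≪≫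
    stmt7Complex.cycles₀Iso

noncomputable def scOddIso (m : ℕ) :
    stmt7Complex.sc' (2 * m + 2) (2 * m + 1) (2 * m) ≅ Int.natMulShortComplex (m + 1) :=
  ShortComplex.isoMk (Iso.refl _) (Iso.refl _) (Iso.refl _)
    ((Category.id_comp _).trans ((d_from_even m).symm.trans (Category.comp_id _).symm))
    ((Category.id_comp _).trans ((d_from_odd m).symm.trans (Category.comp_id _).symm))

noncomputable def homologyOddIso (m : ℕ) :
    stmt7Complex.homology (2 * m + 1) ≅ ModuleCat.of ℤ (ZMod (m + 1)) :=
  stmt7Complex.homologyIsoSc' _ _ _ (ChainComplex.prev ℕ _) (ChainComplex.next_nat_succ _) ≪≫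
    ShortComplex.homologyMapIso (scOddIso m) ≪≫ Int.natMulShortComplexHomologyIso (m + 1)

lemma isZero_homology_even (m : ℕ) : IsZero (stmt7Complex.homology (2 * m + 2)) := by
  refine IsZero.of_iso ?_ (stmt7Complex.homologyIsoSc' (2 * m + 3) (2 * m + 2) (2 * m + 1)
    (ChainComplex.prev ℕ _) (ChainComplex.next_nat_succ _))
  rw [← ShortComplex.exact_iff_isZero_homology, ShortComplex.exact_iff_mono _ (d_from_odd (m + 1))]
  change Mono (stmt7Complex.d (2 * m + 2) (2 * m + 1))
  rw [d_from_even]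
  exact (ModuleCat.mono_iff_injective _).2
    (smul_right_injective ℤ (show ((m + 1 : ℕ) : ℤ) ≠ 0 by omega))

end stmt7Complex

theorem stmt7_homology :
    Nonempty (stmt7Complex.homology 0 ≅ ModuleCat.of ℤ ℤ) ∧
    (∀ n : ℕ, 1 ≤ n → Nonempty (stmt7Complex.homology (2 * n - 1) ≅ ModuleCat.of ℤ (ZMod n))) ∧
    (∀ n : ℕ, 1 ≤ n → IsZero (stmt7Complex.homology (2 * n))) := by
  refine ⟨⟨stmt7Complex.homologyZeroIso⟩, fun n hn => ?_, fun n hn => ?_⟩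
  all_goals obtain ⟨m, rfl⟩ : ∃ m, n = m + 1 := ⟨n - 1, by omega⟩
  · rw [show 2 * (m + 1) - 1 = 2 * m + 1 by omega]
    exact ⟨stmt7Complex.homologyOddIso m⟩
  · rw [show 2 * (m + 1) = 2 * m + 2 by omega]
    exact stmt7Complex.isZero_homology_even m
end

section
/- Define a chain complex D of abelian groups indexed by ℕ with D_{2n} = ℤ for all n ≥ 0, D_{2n+3} = ℤ for all n ≥ 0, D_1 = 0, and with the only nonzero differentials D_{2n+3} → D_{2n+2} given by multiplication by n+1. Then H_0(D) ≅ ℤ, H_{2m}(D) ≅ ℤ/m for all m ≥ 1, and H_j(D) = 0 for all odd j. -/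
open CategoryTheory CategoryTheory.Limits

/-- The graded abelian groups of the complex `D`: `D_j = ℤ` for `j ≠ 1` (recall `ZMod 0 = ℤ`)
and `D_1 = 0` (as `ZMod 1` is trivial).  Thus `D_{2n} = ℤ` for `n ≥ 0` and
`D_{2n+3} = ℤ` for `n ≥ 0`, while `D_1 = 0`. -/
noncomputable def stmt8X (j : ℕ) : ModuleCat ℤ :=
  ModuleCat.of ℤ (ZMod (if j = 1 then 1 else 0))

/-- The differentials of `D`: the only nonzero differentials are
`D_{2n+3} → D_{2n+2}`, given by multiplication by `n + 1`.
(The differential out of degree `m+3`, for `m` even, i.e. `m = 2n`, lands in degree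
`m + 2 = 2n + 2` and is multiplication by `m/2 + 1 = n + 1`.) -/
noncomputable def stmt8d : ∀ j : ℕ, stmt8X (j + 1) ⟶ stmt8X j
  | 0 => 0
  | 1 => 0
  | (m + 2) =>
      if m % 2 = 0 then
        ModuleCat.ofHom (((m / 2 + 1 : ℕ) : ℤ) • (LinearMap.id : ZMod 0 →ₗ[ℤ] ZMod 0))
      else 0

theorem stmt8_sq (j : ℕ) : stmt8d (j + 1) ≫ stmt8d j = 0 := by
  match j with
  | 0 => simp [stmt8d]
  | 1 => simp only [stmt8d]; exact Limits.comp_zero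
  | (m + 2) =>
    show stmt8d (m + 1 + 2) ≫ stmt8d (m + 2) = 0
    rcases Nat.even_or_odd m with h | h
    · have h0 := Nat.even_iff.mp h
      have e : stmt8d (m + 1 + 2) = 0 := by
        simp only [stmt8d]; exact if_neg (show ¬ (m + 1) % 2 = 0 by omega)
      rw [e]; exact Limits.zero_comp
    · have h1 := Nat.odd_iff.mp h
      have e : stmt8d (m + 2) = 0 := by
        simp only [stmt8d]; exact if_neg (show ¬ m % 2 = 0 by omega)
      rw [e]; exact Limits.comp_zero

/-- The chain complex `D`. -/
noncomputable def stmt8Complex : ChainComplex (ModuleCat ℤ) ℕ :=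
  ChainComplex.of stmt8X stmt8d stmt8_sq

/-! Only the differentials `D_{2n+3} → D_{2n+2}` are nonzero, and they are multiplication by
`n + 1` on `ℤ`, hence injective. So every odd degree is exact, `H_0 = D_0`, and
`H_{2n+2} = ℤ / (n + 1)`. -/

universe u v

theorem HomologicalComplex.exactAt_iff_mono_d {C : Type*} [Category C] [Abelian C] {ι : Type*}
    {c : ComplexShape ι} (K : HomologicalComplex C c) {i j k : ι}
    (hi : c.prev j = i) (hk : c.next j = k) (h : K.d i j = 0) :
    K.ExactAt j ↔ Mono (K.d j k) :=
  (K.exactAt_iff' i j k hi hk).trans (ShortComplex.exact_iff_mono _ h)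

noncomputable def HomologicalComplex.homologyIsoQuotientRange {R : Type u} [Ring R] {ι : Type*}
    {c : ComplexShape ι} (K : HomologicalComplex (ModuleCat.{v} R) c) {i j k : ι}
    (hi : c.prev j = i) (hk : c.next j = k) (h : K.d j k = 0) :
    K.homology j ≅ ModuleCat.of R (K.X j ⧸ LinearMap.range (K.d i j).hom) :=
  K.isoHomologyι j k hk h ≪≫ K.opcyclesIsoSc' i j k hi hk ≪≫ (K.sc' i j k).moduleCatOpcyclesIso

noncomputable def Int.quotientRangeSmulEquivZMod (c : ℕ) :
    (ℤ ⧸ LinearMap.range ((c : ℤ) • LinearMap.id : ℤ →ₗ[ℤ] ℤ)) ≃ₗ[ℤ] ZMod c :=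
  Submodule.quotEquivOfEq _ _ (by ext; simp [Submodule.mem_span_singleton, mul_comm]) ≪≫ₗ
    (Int.quotientSpanNatEquivZMod c).toAddEquiv.toIntLinearEquiv

theorem ModuleCat.mono_ofHom_smul_id {R M : Type*} [CommRing R] [IsDomain R] [AddCommGroup M]
    [Module R M] [Module.IsTorsionFree R M] {c : R} (hc : c ≠ 0) :
    Mono (ModuleCat.ofHom (c • LinearMap.id : M →ₗ[R] M)) :=
  (ModuleCat.mono_iff_injective _).2 (smul_right_injective M hc)

theorem stmt8Complex_d_one_zero : stmt8Complex.d 1 0 = 0 :=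
  ChainComplex.of_d stmt8X stmt8d 0

theorem stmt8Complex_d_even (n : ℕ) : stmt8Complex.d (2 * n + 2) (2 * n + 1) = 0 := by
  refine (ChainComplex.of_d stmt8X stmt8d (2 * n + 1)).trans ?_
  rcases n with _ | n
  · rfl
  · exact if_neg (by simp)

theorem stmt8Complex_d_odd (n : ℕ) :
    stmt8Complex.d (2 * n + 3) (2 * n + 2) =
      ModuleCat.ofHom (((n + 1 : ℕ) : ℤ) • (LinearMap.id : ℤ →ₗ[ℤ] ℤ)) := by
  refine (ChainComplex.of_d stmt8X stmt8d (2 * n + 2)).trans ((if_pos (by omega)).trans ?_)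
  congr 3
  omega

theorem stmt8_homology :
    Nonempty (stmt8Complex.homology 0 ≅ ModuleCat.of ℤ ℤ) ∧
    (∀ m : ℕ, 1 ≤ m → Nonempty (stmt8Complex.homology (2 * m) ≅ ModuleCat.of ℤ (ZMod m))) ∧
    (∀ j : ℕ, Odd j → IsZero (stmt8Complex.homology j)) := by
  refine ⟨⟨stmt8Complex.isoHomologyι₀ ≪≫
    (stmt8Complex.pOpcyclesIso 1 0 (by simp) stmt8Complex_d_one_zero).symm⟩, ?_, ?_⟩
  · rintro m hm
    obtain ⟨n, rfl⟩ : ∃ n, m = n + 1 := ⟨m - 1, by omega⟩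
    rw [show 2 * (n + 1) = 2 * n + 2 by ring]
    exact ⟨stmt8Complex.homologyIsoQuotientRange (ChainComplex.prev ℕ _)
      (ChainComplex.next_nat_succ _) (stmt8Complex_d_even n) ≪≫
      (Submodule.quotEquivOfEq _ _
        (congrArg (fun f => LinearMap.range f.hom) (stmt8Complex_d_odd n)) ≪≫ₗ
        Int.quotientRangeSmulEquivZMod (n + 1)).toModuleIso⟩
  · rintro j ⟨_ | n, rfl⟩ <;> refine HomologicalComplex.ExactAt.isZero_homology ?_
    · exact .of_isZero (ModuleCat.isZero_of_subsingleton (ModuleCat.of ℤ (ZMod 1)))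
    · refine (stmt8Complex.exactAt_iff_mono_d (ChainComplex.prev ℕ _)
        (ChainComplex.next_nat_succ _) (stmt8Complex_d_even (n + 1))).2 ?_
      rw [show 2 * (n + 1) = 2 * n + 2 by ring, stmt8Complex_d_odd]
      exact ModuleCat.mono_ofHom_smul_id (by omega)
end
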